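/- arXiv:2107.09696 — 7 statements merged into one kernel-verified Lean document; each statement's English description precedes it below -/
import Mathlib

section
/- Let 𝒮 be a 1-nested compatible set pair system on X and let (S,H) ∈ 𝒮 with H ≠ ∅. Then there is exactly one element of 𝒮 that covers (S,H) in the partial order (𝒮,≤); that is, (S,H) has indegree 1 in the Hasse diagram D(𝒮). -/
open Set

variable {X : Type*}

/-- A set pair on `X`: an ordered pair `(S,H)` of subsets of `X` with `S ≠ ∅` and `S ∩ H = ∅`. -/
def IsSetPair (p : Set X × Set X) : Prop :=
  p.1 ≠ ∅ ∧ p.1 ∩ p.2 = ∅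

/-- A set pair system on `X`: a collection of set pairs on `X`. -/
def IsSPS (𝒮 : Set (Set X × Set X)) : Prop :=
  ∀ p ∈ 𝒮, IsSetPair p

/-- The strict relation `<` on set pairs: `(S₁,H₁) < (S₂,H₂)` iff they are distinct and
(a) `S₁ ∪ H₁ ⊆ S₂`, or (b) `S₁ ∪ H₁ ⊆ H₂`, or (c) `S₁ ⊊ S₂` and `H₁ = H₂ ≠ ∅`. -/
def splt (p q : Set X × Set X) : Prop :=
  p ≠ q ∧ (p.1 ∪ p.2 ⊆ q.1 ∨ p.1 ∪ p.2 ⊆ q.2 ∨ (p.1 ⊂ q.1 ∧ p.2 = q.2 ∧ q.2 ≠ ∅))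

/-- `(S₁,H₁) ≤ (S₂,H₂)` iff `(S₁,H₁) < (S₂,H₂)` or `(S₁,H₁) = (S₂,H₂)`. -/
def sple (p q : Set X × Set X) : Prop :=
  splt p q ∨ p = q

/-- Exactly one of four propositions holds. -/
def ExactlyOne4 (a b c d : Prop) : Prop :=
  (a ∧ ¬b ∧ ¬c ∧ ¬d) ∨ (¬a ∧ b ∧ ¬c ∧ ¬d) ∨ (¬a ∧ ¬b ∧ c ∧ ¬d) ∨ (¬a ∧ ¬b ∧ ¬c ∧ d)

/-- Exactly one of three propositions holds. -/
def ExactlyOne3 (a b c : Prop) : Prop :=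
  (a ∧ ¬b ∧ ¬c) ∨ (¬a ∧ b ∧ ¬c) ∨ (¬a ∧ ¬b ∧ c)

/-- A 1-nested compatible set pair system on `X`: a set pair system satisfying (NC1)–(NC5). -/
def OneNestedCompatible (𝒮 : Set (Set X × Set X)) : Prop :=
  IsSPS 𝒮 ∧
  -- (NC1)
  (((Set.univ : Set X), (∅ : Set X)) ∈ 𝒮) ∧
  -- (NC2)
  (∀ x : X, (({x} : Set X), (∅ : Set X)) ∈ 𝒮) ∧
  -- (NC3)
  (∀ p ∈ 𝒮, p.2 ≠ ∅ → ((p.2, (∅ : Set X)) : Set X × Set X) ∈ 𝒮) ∧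
  -- (NC4)
  (∀ p ∈ 𝒮, ∀ q ∈ 𝒮, p ≠ q →
    ExactlyOne4 (splt p q) (splt q p)
      ((p.1 ∪ p.2) ∩ (q.1 ∪ q.2) = ∅)
      (p.1 ∩ q.1 = ∅ ∧ p.2 = q.2 ∧ p.2 ≠ ∅)) ∧
  -- (NC5)
  (¬ ∃ p ∈ 𝒮, ∃ q ∈ 𝒮, ∃ r ∈ 𝒮,
    p.2 = q.2 ∧ q.2 = r.2 ∧ p.2 ≠ ∅ ∧ p.1 ∩ q.1 = ∅ ∧
    (p.1 ∪ q.1 ⊆ r.1 ∨ (p.1 ∪ q.1) ∩ r.1 = ∅))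

/-- `p` covers `q` in the partial order `(𝒮,≤)`: an arc from `p` to `q`
in the Hasse diagram `D(𝒮)`; `p` is a parent of `q`, and `q` is a child of `p`. -/
def SPCovers (𝒮 : Set (Set X × Set X)) (p q : Set X × Set X) : Prop :=
  p ∈ 𝒮 ∧ q ∈ 𝒮 ∧ splt q p ∧ ¬ ∃ r ∈ 𝒮, splt q r ∧ splt r p

/-- `L` is the directed path `P(S,H)` in `D(𝒮)` associated with `(S,H) ∈ 𝒮`, `H ≠ ∅`:
a sequence `(q₀,…,q_m)` of elements of `𝒮` with `m ≥ 2` in which `q_j` covers `q_{j+1}`,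
such that `q_m = (H,∅)`, every interior `q_j` (`1 ≤ j ≤ m-1`) has second component `H`,
`q_i = (S,H)` for some `1 ≤ i ≤ m-1`, and the first element `q₀ = (S₊,H₊)` satisfies
`S ∪ H ⊆ S₊` and `H₊ ≠ H`. -/
def IsSPPath (𝒮 : Set (Set X × Set X)) (S H : Set X) (L : List (Set X × Set X)) : Prop :=
  3 ≤ L.length ∧
  List.Chain' (fun a b => SPCovers 𝒮 a b) L ∧
  L.getLast? = some ((H, (∅ : Set X)) : Set X × Set X) ∧
  (∀ i : ℕ, ∀ p : Set X × Set X, 1 ≤ i → i + 1 < L.length → L[i]? = some p → p.2 = H) ∧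
  (∃ i : ℕ, 1 ≤ i ∧ i + 1 < L.length ∧ L[i]? = some ((S, H) : Set X × Set X)) ∧
  (∃ p : Set X × Set X, L.head? = some p ∧ S ∪ H ⊆ p.1 ∧ p.2 ≠ H)

/-- A directed path in the Hasse diagram `D(𝒮)`: a sequence of at least two elements of `𝒮`
in which each element covers the next. -/
def IsDirPath (𝒮 : Set (Set X × Set X)) (L : List (Set X × Set X)) : Prop :=
  2 ≤ L.length ∧ List.Chain' (fun a b => SPCovers 𝒮 a b) L ∧ ∀ p ∈ L, p ∈ 𝒮


/-!
A minimal element of `𝒮` strictly above `(S,H)` exists because `<` is a strict order on a finite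
set and `(S,H) < (X,∅)`; it covers `(S,H)`. Two distinct covers `p`, `p'` are incomparable (the
smaller one would sit strictly between), so (NC4) makes `p.1` and `p'.1` disjoint. Yet every cover
`p` satisfies `S ⊆ p.1`: otherwise `S ∪ H ⊆ p.2`, and `(p.2, ∅)`, which lies in `𝒮` by (NC3),
would sit strictly between `(S,H)` and `p`.
-/

theorem IsSetPair.splt_asymm {p q : Set X × Set X} (hp : IsSetPair p) (hq : IsSetPair q)
    (hpq : splt p q) : ¬ splt q p := by
  simp only [IsSetPair, splt, Set.ssubset_def, Set.subset_def, Set.ext_iff, ne_eq,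
    Prod.ext_iff, Set.mem_union, Set.mem_inter_iff, Set.mem_empty_iff_false, iff_false,
    not_and, not_forall] at *
  grind

theorem IsSetPair.splt_trans {p q r : Set X × Set X} (hp : IsSetPair p) (hq : IsSetPair q)
    (hpq : splt p q) (hqr : splt q r) : splt p r := by
  refine ⟨by rintro rfl; exact hp.splt_asymm hq hpq hqr, ?_⟩
  simp only [splt, Set.ssubset_def, Set.subset_def, Set.ext_iff, ne_eq,
    Set.mem_union, Set.mem_empty_iff_false, iff_false, not_forall] at *
  grind

theorem IsSPS.wellFounded_splt [Finite X] {𝒮 : Set (Set X × Set X)} (h𝒮 : IsSPS 𝒮) :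
    WellFounded fun a b : 𝒮 => splt a.1 b.1 :=
  have : IsTrans 𝒮 fun a b => splt a.1 b.1 :=
    ⟨fun a b _ hab hbc => (h𝒮 _ a.2).splt_trans (h𝒮 _ b.2) hab hbc⟩
  have : Std.Irrefl fun a b : 𝒮 => splt a.1 b.1 := ⟨fun _ h => h.1 rfl⟩
  Finite.wellFounded_of_trans_of_irrefl _

theorem IsSPS.exists_spCovers [Finite X] {𝒮 : Set (Set X × Set X)} (h𝒮 : IsSPS 𝒮)
    {q p : Set X × Set X} (hq : q ∈ 𝒮) (hp : p ∈ 𝒮) (hqp : splt q p) :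
    ∃ m, SPCovers 𝒮 m q := by
  obtain ⟨m, hm, hmin⟩ := h𝒮.wellFounded_splt.has_min {a : 𝒮 | splt q a.1} ⟨⟨p, hp⟩, hqp⟩
  exact ⟨m, m.2, hq, hm, fun ⟨r, hr, hqr, hrm⟩ => hmin ⟨r, hr⟩ hqr hrm⟩

namespace OneNestedCompatible

variable {𝒮 : Set (Set X × Set X)}

theorem splt_or_splt_or_fst_inter_eq_empty (h : OneNestedCompatible 𝒮) {p q : Set X × Set X}
    (hp : p ∈ 𝒮) (hq : q ∈ 𝒮) (hne : p ≠ q) : splt p q ∨ splt q p ∨ p.1 ∩ q.1 = ∅ := by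
  obtain ⟨-, -, -, -, hNC4, -⟩ := h
  rcases hNC4 p hp q hq hne with ⟨h1, -⟩ | ⟨-, h2, -⟩ | ⟨-, -, h3, -⟩ | ⟨-, -, -, h4, -⟩
  · exact .inl h1
  · exact .inr (.inl h2)
  · exact .inr (.inr (Set.subset_empty_iff.1 (h3 ▸ Set.inter_subset_inter
      Set.subset_union_left Set.subset_union_left)))
  · exact .inr (.inr h4)

theorem exists_spCovers [Finite X] (h : OneNestedCompatible 𝒮) {q : Set X × Set X} (hq : q ∈ 𝒮)
    (hne : q ≠ (Set.univ, ∅)) : ∃ p, SPCovers 𝒮 p q := by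
  obtain ⟨hSPS, hNC1, -⟩ := h
  exact hSPS.exists_spCovers hq hNC1 ⟨hne, .inl (Set.subset_univ _)⟩

theorem fst_subset_of_spCovers (h : OneNestedCompatible 𝒮) {p q : Set X × Set X}
    (hcov : SPCovers 𝒮 p q) (hq2 : q.2 ≠ ∅) : q.1 ⊆ p.1 := by
  obtain ⟨hSPS, -, -, hNC3, -⟩ := h
  obtain ⟨hp, hq, ⟨-, hqp | hqp | hqp⟩, hnot⟩ := hcov
  · exact Set.subset_union_left.trans hqp
  · have hp2 : p.2 ≠ ∅ := fun he =>
      (hSPS q hq).1 (Set.subset_empty_iff.1 (he ▸ Set.subset_union_left.trans hqp))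
    refine absurd ⟨(p.2, ∅), hNC3 p hp hp2, ⟨?_, .inl hqp⟩, ?_, .inr (.inl ?_)⟩ hnot
    · exact fun he => hq2 (congrArg Prod.snd he)
    · exact fun he => hp2 (congrArg Prod.snd he).symm
    · simp
  · exact hqp.1.subset

theorem spCovers_unique (h : OneNestedCompatible 𝒮) {p p' q : Set X × Set X}
    (hp : SPCovers 𝒮 p q) (hp' : SPCovers 𝒮 p' q) (hq2 : q.2 ≠ ∅) : p = p' := by
  by_contra hne
  rcases h.splt_or_splt_or_fst_inter_eq_empty hp.1 hp'.1 hne with hpp' | hp'p | hdisj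
  · exact hp'.2.2.2 ⟨p, hp.1, hp.2.2.1, hpp'⟩
  · exact hp.2.2.2 ⟨p', hp'.1, hp'.2.2.1, hp'p⟩
  · refine (h.1 q hp.2.1).1 (Set.subset_empty_iff.1 (hdisj ▸ Set.subset_inter ?_ ?_))
    exacts [h.fst_subset_of_spCovers hp hq2, h.fst_subset_of_spCovers hp' hq2]

end OneNestedCompatible

theorem indegree_one_of_H_nonempty_general {X : Type*} [Fintype X]
    (𝒮 : Set (Set X × Set X)) (h : OneNestedCompatible 𝒮)
    (S H : Set X) (hmem : ((S, H) : Set X × Set X) ∈ 𝒮) (hH : H ≠ ∅) :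
    ∃! p : Set X × Set X, SPCovers 𝒮 p (S, H) := by
  obtain ⟨p, hp⟩ := h.exists_spCovers hmem fun he => hH (congrArg Prod.snd he)
  exact ⟨p, hp, fun p' hp' => h.spCovers_unique hp' hp hH⟩

/-- If `𝒮` is 1-nested compatible and `(S,H) ∈ 𝒮` with `H ≠ ∅`, then exactly one
element of `𝒮` covers `(S,H)`; i.e. `(S,H)` has indegree 1 in the Hasse diagram `D(𝒮)`. -/
theorem indegree_one_of_H_nonempty {X : Type*} [Fintype X] [Nonempty X]
    (𝒮 : Set (Set X × Set X)) (h : OneNestedCompatible 𝒮)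
    (S H : Set X) (hmem : ((S, H) : Set X × Set X) ∈ 𝒮) (hH : H ≠ ∅) :
    ∃! p : Set X × Set X, SPCovers 𝒮 p (S, H) :=
  indegree_one_of_H_nonempty_general 𝒮 h S H hmem hH
end

section
/- Let 𝒮 be a 1-nested compatible set pair system on X and let (S,H) ∈ 𝒮 with H ≠ ∅ (so that (H,∅) ∈ 𝒮 by (NC3)). Then for every (S₁,H₁) ∈ 𝒮 with (H,∅) < (S₁,H₁) < (S,H), we have S₁ ⊊ S and H₁ = H. -/
open Set

variable {X : Type*}

/-! Below `(H,∅)` only case (c) of `<` is possible: the lower bound forces `H` into `S₁` or `H₁`,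
so case (a) would put the nonempty `H` inside `S`, which is disjoint from it, and case (b) would
force `(S₁,H₁)` to be `(H,∅)` itself or to have `S₁ ⊆ H = H₁`. -/

lemma subset_or_subset_of_splt_empty {A : Set X} {q : Set X × Set X} (h : splt (A, ∅) q) :
    A ⊆ q.1 ∨ A ⊆ q.2 := by
  obtain ⟨-, ha | hb | ⟨-, hc, hne⟩⟩ := h
  · exact Or.inl (union_empty A ▸ ha)
  · exact Or.inr (union_empty A ▸ hb)
  · exact absurd hc.symm hne

lemma not_union_subset_of_splt_empty {A : Set X} {q : Set X × Set X} (hq : IsSetPair q)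
    (h : splt (A, ∅) q) : ¬ q.1 ∪ q.2 ⊆ A := by
  intro hsub
  obtain ⟨hq₁, hdisj⟩ := hq
  rcases subset_or_subset_of_splt_empty h with hA | hA
  · have hfst : q.1 = A := hA.antisymm' (subset_union_left.trans hsub)
    have hsnd : q.2 = ∅ := by
      rw [← hdisj, hfst]
      exact (inter_eq_right.mpr (subset_union_right.trans hsub)).symm
    exact h.1 (Prod.ext hfst.symm hsnd.symm)
  · have hsnd : q.2 = A := hA.antisymm' (subset_union_right.trans hsub)
    have hfst : q.1 ⊆ q.2 := hsnd ▸ subset_union_left.trans hsub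
    exact hq₁ (hdisj ▸ (inter_eq_left.mpr hfst).symm)

theorem between_H_empty_and_SH_general {X : Type*}
    (𝒮 : Set (Set X × Set X)) (h : OneNestedCompatible 𝒮)
    (S H : Set X) (hmem : ((S, H) : Set X × Set X) ∈ 𝒮) (hH : H ≠ ∅)
    (S₁ H₁ : Set X) (hmem₁ : ((S₁, H₁) : Set X × Set X) ∈ 𝒮)
    (hlow : splt ((H, (∅ : Set X)) : Set X × Set X) (S₁, H₁))
    (hup : splt ((S₁, H₁) : Set X × Set X) (S, H)) :
    S₁ ⊂ S ∧ H₁ = H := by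
  obtain ⟨-, ha | hb | ⟨hc, hH₁, -⟩⟩ := hup
  · have hHS : H ⊆ S := by
      rcases subset_or_subset_of_splt_empty hlow with hH' | hH'
      · exact hH'.trans (subset_union_left.trans ha)
      · exact hH'.trans (subset_union_right.trans ha)
    exact absurd ((h.1 _ hmem).2 ▸ (inter_eq_right.mpr hHS).symm) hH
  · exact absurd hb (not_union_subset_of_splt_empty (h.1 _ hmem₁) hlow)
  · exact ⟨hc, hH₁⟩

/-- If `𝒮` is 1-nested compatible, `(S,H) ∈ 𝒮` with `H ≠ ∅`, then for every
`(S₁,H₁) ∈ 𝒮` with `(H,∅) < (S₁,H₁) < (S,H)` we have `S₁ ⊊ S` and `H₁ = H`. -/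
theorem between_H_empty_and_SH {X : Type*} [Fintype X] [Nonempty X]
    (𝒮 : Set (Set X × Set X)) (h : OneNestedCompatible 𝒮)
    (S H : Set X) (hmem : ((S, H) : Set X × Set X) ∈ 𝒮) (hH : H ≠ ∅)
    (S₁ H₁ : Set X) (hmem₁ : ((S₁, H₁) : Set X × Set X) ∈ 𝒮)
    (hlow : splt ((H, (∅ : Set X)) : Set X × Set X) (S₁, H₁))
    (hup : splt ((S₁, H₁) : Set X × Set X) (S, H)) :
    S₁ ⊂ S ∧ H₁ = H :=
  between_H_empty_and_SH_general 𝒮 h S H hmem hH S₁ H₁ hmem₁ hlow hup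
end

section
/- Let 𝒮 be a 1-nested compatible set pair system on X and let (S,∅) ∈ 𝒮. Then: (i) (S,∅) has at most one parent (S₁,H₁) with H₁ = ∅ in D(𝒮); (ii) (S,∅) has at most two distinct parents (S₁,H₁), (S₂,H₂) with H₁ ≠ ∅ and H₂ ≠ ∅ in D(𝒮); and (iii) if (S₁,H₁) and (S₂,H₂) are two distinct parents of (S,∅) with H₁ ≠ ∅ and H₂ ≠ ∅, then S₁ ∩ S₂ = ∅ and H₁ = H₂ = S. -/
open Set

variable {X : Type*}

/-!
Two distinct parents of `(S,∅)` are incomparable, and both contain the nonempty set `S` in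
their support, so (NC4) forces them to be siblings: disjoint first components and a common
nonempty second component `H`. This already gives (i). A point of `S` lies in neither first
component, hence `S ⊆ H`, and since `(S,∅) ≤ (H,∅) < (S₁,H)` with `(H,∅) ∈ 𝒮` by (NC3), the
covering relation forces `S = H`, which is (iii). Three pairwise sibling parents would violate
(NC5), which is (ii).
-/

section

variable {𝒮 : Set (Set X × Set X)} {S : Set X} {p q : Set X × Set X}

def SPSiblings (p q : Set X × Set X) : Prop :=
  p.1 ∩ q.1 = ∅ ∧ p.2 = q.2 ∧ p.2 ≠ ∅

theorem ExactlyOne4.or {a b c d : Prop} (h : ExactlyOne4 a b c d) : a ∨ b ∨ c ∨ d := by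
  rcases h with ⟨h, -⟩ | ⟨-, h, -⟩ | ⟨-, -, h, -⟩ | ⟨-, -, -, h⟩ <;> simp [h]

theorem subset_union_of_splt_empty (h : splt (S, ∅) p) : S ⊆ p.1 ∪ p.2 := by
  obtain ⟨-, h | h | ⟨-, h, hne⟩⟩ := h
  · exact (union_empty S ▸ h).trans subset_union_left
  · exact (union_empty S ▸ h).trans subset_union_right
  · exact absurd h.symm hne

theorem SPCovers.not_splt_of_covers {r : Set X × Set X} (hp : SPCovers 𝒮 p r)
    (hq : SPCovers 𝒮 q r) : ¬ splt p q :=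
  fun hpq => hq.2.2.2 ⟨p, hp.1, hp.2.2.1, hpq⟩

theorem OneNestedCompatible.spSiblings_of_covers (h : OneNestedCompatible 𝒮)
    (hp : SPCovers 𝒮 p (S, ∅)) (hq : SPCovers 𝒮 q (S, ∅)) (hpq : p ≠ q) :
    SPSiblings p q := by
  rcases (h.2.2.2.2.1 p hp.1 q hq.1 hpq).or with hlt | hlt | hdisj | hsib
  · exact absurd hlt (hp.not_splt_of_covers hq)
  · exact absurd hlt (hq.not_splt_of_covers hp)
  · obtain ⟨x, hx⟩ := nonempty_iff_ne_empty.2 (h.1 _ hp.2.1).1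
    refine absurd (hdisj.subset ⟨?_, ?_⟩) (notMem_empty x)
    · exact subset_union_of_splt_empty hp.2.2.1 hx
    · exact subset_union_of_splt_empty hq.2.2.1 hx
  · exact hsib

theorem OneNestedCompatible.snd_eq_of_covers_of_subset_snd (h : OneNestedCompatible 𝒮)
    (hp : SPCovers 𝒮 p (S, ∅)) (hp2 : p.2 ≠ ∅) (hS : S ⊆ p.2) : p.2 = S := by
  by_contra hne
  refine hp.2.2.2 ⟨(p.2, ∅), h.2.2.2.1 p hp.1 hp2, ⟨?_, Or.inl ?_⟩, ⟨?_, Or.inr (Or.inl ?_)⟩⟩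
  · exact fun heq => hne (congrArg Prod.fst heq).symm
  · simpa using hS
  · exact fun heq => hp2 (congrArg Prod.snd heq).symm
  · simp

theorem OneNestedCompatible.fst_inter_eq_empty_and_snd_eq_of_covers (h : OneNestedCompatible 𝒮)
    (hp : SPCovers 𝒮 p (S, ∅)) (hq : SPCovers 𝒮 q (S, ∅)) (hpq : p ≠ q) :
    p.1 ∩ q.1 = ∅ ∧ p.2 = S ∧ q.2 = S := by
  obtain ⟨hdisj, hH, hH0⟩ := h.spSiblings_of_covers hp hq hpq
  have hSp : S ⊆ p.2 := by
    intro x hx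
    rcases subset_union_of_splt_empty hp.2.2.1 hx with hxp | hxp
    · rcases subset_union_of_splt_empty hq.2.2.1 hx with hxq | hxq
      · exact absurd (hdisj.subset ⟨hxp, hxq⟩) (notMem_empty x)
      · exact absurd ((h.1 p hp.1).2.subset ⟨hxp, hH ▸ hxq⟩) (notMem_empty x)
    · exact hxp
  have hpS := h.snd_eq_of_covers_of_subset_snd hp hH0 hSp
  exact ⟨hdisj, hpS, hH ▸ hpS⟩

end

theorem parents_of_empty_H_general {X : Type*}
    (𝒮 : Set (Set X × Set X)) (h : OneNestedCompatible 𝒮)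
    (S : Set X) :
    (∀ p q : Set X × Set X,
      SPCovers 𝒮 p (S, (∅ : Set X)) → SPCovers 𝒮 q (S, (∅ : Set X)) →
      p.2 = ∅ → q.2 = ∅ → p = q) ∧
    (∀ p q r : Set X × Set X,
      SPCovers 𝒮 p (S, (∅ : Set X)) → SPCovers 𝒮 q (S, (∅ : Set X)) →
      SPCovers 𝒮 r (S, (∅ : Set X)) →
      p.2 ≠ ∅ → q.2 ≠ ∅ → r.2 ≠ ∅ → p ≠ q → p ≠ r → q ≠ r → False) ∧
    (∀ p q : Set X × Set X,
      SPCovers 𝒮 p (S, (∅ : Set X)) → SPCovers 𝒮 q (S, (∅ : Set X)) →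
      p.2 ≠ ∅ → q.2 ≠ ∅ → p ≠ q → p.1 ∩ q.1 = ∅ ∧ p.2 = S ∧ q.2 = S) := by
  refine ⟨?_, ?_, fun p q hp hq _ _ hpq => h.fst_inter_eq_empty_and_snd_eq_of_covers hp hq hpq⟩
  · intro p q hp hq hp2 _
    by_contra hpq
    exact (h.spSiblings_of_covers hp hq hpq).2.2 hp2
  · intro p q r hp hq hr hp2 _ _ hpq hpr hqr
    obtain ⟨hpq1, hpS, hqS⟩ := h.fst_inter_eq_empty_and_snd_eq_of_covers hp hq hpq
    obtain ⟨hpr1, -, hrS⟩ := h.fst_inter_eq_empty_and_snd_eq_of_covers hp hr hpr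
    obtain ⟨hqr1, -⟩ := h.fst_inter_eq_empty_and_snd_eq_of_covers hq hr hqr
    refine h.2.2.2.2.2 ⟨p, hp.1, q, hq.1, r, hr.1, hpS.trans hqS.symm, hqS.trans hrS.symm,
      hp2, hpq1, Or.inr ?_⟩
    rw [union_inter_distrib_right, hpr1, hqr1, union_empty]

/-- If `𝒮` is 1-nested compatible and `(S,∅) ∈ 𝒮`, then (i) `(S,∅)` has at most
one parent with empty second component in `D(𝒮)`, (ii) at most two distinct parents with
nonempty second components, and (iii) if it has two distinct parents with nonempty second
components, these have disjoint first components and both second components equal `S`. -/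
theorem parents_of_empty_H {X : Type*} [Fintype X] [Nonempty X]
    (𝒮 : Set (Set X × Set X)) (h : OneNestedCompatible 𝒮)
    (S : Set X) (hmem : ((S, (∅ : Set X)) : Set X × Set X) ∈ 𝒮) :
    (∀ p q : Set X × Set X,
      SPCovers 𝒮 p (S, (∅ : Set X)) → SPCovers 𝒮 q (S, (∅ : Set X)) →
      p.2 = ∅ → q.2 = ∅ → p = q) ∧
    (∀ p q r : Set X × Set X,
      SPCovers 𝒮 p (S, (∅ : Set X)) → SPCovers 𝒮 q (S, (∅ : Set X)) →
      SPCovers 𝒮 r (S, (∅ : Set X)) →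
      p.2 ≠ ∅ → q.2 ≠ ∅ → r.2 ≠ ∅ → p ≠ q → p ≠ r → q ≠ r → False) ∧
    (∀ p q : Set X × Set X,
      SPCovers 𝒮 p (S, (∅ : Set X)) → SPCovers 𝒮 q (S, (∅ : Set X)) →
      p.2 ≠ ∅ → q.2 ≠ ∅ → p ≠ q → p.1 ∩ q.1 = ∅ ∧ p.2 = S ∧ q.2 = S) :=
  parents_of_empty_H_general 𝒮 h S
end

section
/- Let 𝒮 be a 1-nested compatible set pair system on X. Then every (S,H) ∈ 𝒮 has at most two parents in D(𝒮) (i.e., indegree at most 2), and if (S,H) has two distinct parents (S₁,H₁) and (S₂,H₂), then H = ∅, H₁ = H₂ = S, and S₁ ∩ S₂ = ∅. -/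
open Set

variable {X : Type*}

/-
Two distinct parents `a`, `b` of `p = (S,H)` are incomparable (either would lie between `p`
and the other), yet both supports contain `S ≠ ∅`; so (NC4) forces `a.1 ∩ b.1 = ∅` and
`a.2 = b.2 =: H' ≠ ∅`. Since `S` cannot sit in `a.1` (it would then meet `b.1` or `b.2 = a.2`),
`p < a` is an instance of case (b): `S ∪ H ⊆ H'`. Then `p ≤ (H',∅) < a`, and `(H',∅) ∈ 𝒮` by
(NC3), so covering forces `p = (H',∅)`. Three parents would have pairwise disjoint first
components and common second component `S`, which (NC5) forbids.
-/

theorem IsSetPair.fst_nonempty {p : Set X × Set X} (hp : IsSetPair p) : p.1.Nonempty :=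
  nonempty_iff_ne_empty.2 hp.1

theorem ExactlyOne4.of_not_of_not_of_not {a b c d : Prop} (h : ExactlyOne4 a b c d)
    (ha : ¬a) (hb : ¬b) (hc : ¬c) : d := by
  unfold ExactlyOne4 at h
  tauto

theorem splt.subset_fst_or_union_subset_snd {p q : Set X × Set X} (h : splt p q) :
    p.1 ⊆ q.1 ∨ p.1 ∪ p.2 ⊆ q.2 := by
  rcases h.2 with h | h | h
  · exact Or.inl (subset_union_left.trans h)
  · exact Or.inr h
  · exact Or.inl h.1.subset

theorem splt.fst_subset_union {p q : Set X × Set X} (h : splt p q) : p.1 ⊆ q.1 ∪ q.2 := by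
  rcases h.subset_fst_or_union_subset_snd with h | h
  · exact h.trans subset_union_left
  · exact (subset_union_left.trans h).trans subset_union_right

theorem union_subset_snd_of_splt_of_splt {p a b : Set X × Set X} (hp : p.1.Nonempty)
    (ha : a.1 ∩ a.2 = ∅) (hpa : splt p a) (hpb : splt p b)
    (hdisj : a.1 ∩ b.1 = ∅) (hsnd : a.2 = b.2) : p.1 ∪ p.2 ⊆ a.2 := by
  refine hpa.subset_fst_or_union_subset_snd.resolve_left fun hpa1 => ?_
  rcases hpb.subset_fst_or_union_subset_snd with hpb1 | hpb2
  · exact hp.not_subset_empty (hdisj ▸ subset_inter hpa1 hpb1)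
  · exact hp.not_subset_empty (ha ▸ subset_inter hpa1 (hsnd ▸ subset_union_left.trans hpb2))

namespace SPCovers

variable {𝒮 : Set (Set X × Set X)} {p a b : Set X × Set X}

theorem not_splt (ha : SPCovers 𝒮 a p) (hb : SPCovers 𝒮 b p) : ¬ splt a b :=
  fun hab => hb.2.2.2 ⟨a, ha.1, ha.2.2.1, hab⟩

theorem eq_of_union_subset_snd (ha : SPCovers 𝒮 a p) (hmem : (a.2, ∅) ∈ 𝒮) (hne : a.2 ≠ ∅)
    (hsub : p.1 ∪ p.2 ⊆ a.2) : p = (a.2, ∅) := by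
  by_contra hp
  have hlt : splt (a.2, ∅) a :=
    ⟨fun h => hne (congrArg Prod.snd h).symm, Or.inr (Or.inl (by simp))⟩
  exact ha.2.2.2 ⟨(a.2, ∅), hmem, ⟨hp, Or.inl hsub⟩, hlt⟩

end SPCovers

namespace OneNestedCompatible

variable {𝒮 : Set (Set X × Set X)} {p a b : Set X × Set X}

theorem parents_disjoint_of_ne (h : OneNestedCompatible 𝒮) (ha : SPCovers 𝒮 a p)
    (hb : SPCovers 𝒮 b p) (hab : a ≠ b) : a.1 ∩ b.1 = ∅ ∧ a.2 = b.2 ∧ a.2 ≠ ∅ := by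
  obtain ⟨hSPS, -, -, -, hNC4, -⟩ := h
  have ⟨haS, hpS, hpa, _⟩ := ha
  have ⟨hbS, _, hpb, _⟩ := hb
  obtain ⟨x, hx⟩ := (hSPS p hpS).fst_nonempty
  have hmeet : (a.1 ∪ a.2) ∩ (b.1 ∪ b.2) ≠ ∅ :=
    nonempty_iff_ne_empty.1 ⟨x, hpa.fst_subset_union hx, hpb.fst_subset_union hx⟩
  exact (hNC4 a haS b hbS hab).of_not_of_not_of_not (ha.not_splt hb) (hb.not_splt ha) hmeet

theorem parents_of_ne (h : OneNestedCompatible 𝒮) (ha : SPCovers 𝒮 a p)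
    (hb : SPCovers 𝒮 b p) (hab : a ≠ b) :
    p.2 = ∅ ∧ a.2 = p.1 ∧ b.2 = p.1 ∧ a.1 ∩ b.1 = ∅ := by
  obtain ⟨hdisj, hsnd, hne⟩ := h.parents_disjoint_of_ne ha hb hab
  obtain ⟨hSPS, -, -, hNC3, -, -⟩ := h
  have ⟨haS, hpS, hpa, _⟩ := ha
  have hsub : p.1 ∪ p.2 ⊆ a.2 := union_subset_snd_of_splt_of_splt (hSPS p hpS).fst_nonempty
    (hSPS a haS).2 hpa hb.2.2.1 hdisj hsnd
  have hp : p = (a.2, ∅) := ha.eq_of_union_subset_snd (hNC3 a haS hne) hne hsub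
  rw [hp]
  exact ⟨rfl, rfl, hsnd.symm, hdisj⟩

end OneNestedCompatible

theorem indegree_at_most_two_general {X : Type*}
    (𝒮 : Set (Set X × Set X)) (h : OneNestedCompatible 𝒮) :
    ∀ p ∈ 𝒮,
      (∀ a b c : Set X × Set X, SPCovers 𝒮 a p → SPCovers 𝒮 b p → SPCovers 𝒮 c p →
        a ≠ b → a ≠ c → b ≠ c → False) ∧
      (∀ a b : Set X × Set X, SPCovers 𝒮 a p → SPCovers 𝒮 b p → a ≠ b →
        p.2 = ∅ ∧ a.2 = p.1 ∧ b.2 = p.1 ∧ a.1 ∩ b.1 = ∅) := by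
  intro p hp
  refine ⟨fun a b c ha hb hc hab hac hbc => ?_, fun a b ha hb hab => h.parents_of_ne ha hb hab⟩
  obtain ⟨-, haS, hbS, hab⟩ := h.parents_of_ne ha hb hab
  obtain ⟨-, -, hcS, hac⟩ := h.parents_of_ne ha hc hac
  obtain ⟨-, -, -, hbc⟩ := h.parents_of_ne hb hc hbc
  obtain ⟨hSPS, -, -, -, -, hNC5⟩ := h
  have habc : (a.1 ∪ b.1) ∩ c.1 = ∅ := by rw [union_inter_distrib_right, hac, hbc, union_empty]
  exact hNC5 ⟨a, ha.1, b, hb.1, c, hc.1, haS.trans hbS.symm, hbS.trans hcS.symm,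
    haS ▸ (hSPS p hp).1, hab, Or.inr habc⟩

/-- If `𝒮` is 1-nested compatible, every `(S,H) ∈ 𝒮` has at most two parents
in `D(𝒮)`, and if `(S,H)` has two distinct parents `(S₁,H₁)` and `(S₂,H₂)` then `H = ∅`,
`H₁ = H₂ = S` and `S₁ ∩ S₂ = ∅`. -/
theorem indegree_at_most_two {X : Type*} [Fintype X] [Nonempty X]
    (𝒮 : Set (Set X × Set X)) (h : OneNestedCompatible 𝒮) :
    ∀ p ∈ 𝒮,
      (∀ a b c : Set X × Set X, SPCovers 𝒮 a p → SPCovers 𝒮 b p → SPCovers 𝒮 c p →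
        a ≠ b → a ≠ c → b ≠ c → False) ∧
      (∀ a b : Set X × Set X, SPCovers 𝒮 a p → SPCovers 𝒮 b p → a ≠ b →
        p.2 = ∅ ∧ a.2 = p.1 ∧ b.2 = p.1 ∧ a.1 ∩ b.1 = ∅) :=
  indegree_at_most_two_general 𝒮 h
end

section
/- Let 𝒮 be a 1-nested compatible set pair system on X, let (S,H) ∈ 𝒮 with H ≠ ∅, and let (S₂,H₂) be the unique ≤-minimal element of {(S',H') ∈ 𝒮 : (S,H) < (S',H') and H' ≠ H}. Then both of the sets {(S',H') ∈ 𝒮 : (H,∅) < (S',H') < (S,H)} and {(S'',H'') ∈ 𝒮 : (S,H) < (S'',H'') < (S₂,H₂)} are totally ordered by ≤ (any two of their elements are comparable). -/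
open Set

variable {X : Type*}

/-! Every pair strictly between `(H, ∅)` and `(S, H)` has the form `(S', H)` with `S' ⊆ S`, and,
by the minimality of `(S₂, H₂)`, every pair strictly between `(S, H)` and `(S₂, H₂)` has the form
`(S'', H)` with `S ⊆ S''`. By (NC4), two pairs with the same nonempty second component are
comparable unless their first components are disjoint. In the lower interval (NC5), applied with
`(S, H)` as third pair, rules this out; in the upper interval both first components contain `S`. -/

lemma IsSetPair.eq_empty_of_subset_fst_of_subset_snd {p : Set X × Set X} (hp : IsSetPair p)
    {Y : Set X} (h₁ : Y ⊆ p.1) (h₂ : Y ⊆ p.2) : Y = ∅ :=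
  subset_empty_iff.mp (hp.2 ▸ subset_inter h₁ h₂)

lemma snd_eq_and_fst_subset_of_splt_of_splt {p a : Set X × Set X} (hp : IsSetPair p)
    (ha : IsSetPair a) (hp₂ : p.2 ≠ ∅) (hlo : splt (p.2, ∅) a) (hhi : splt a p) :
    a.2 = p.2 ∧ a.1 ⊆ p.1 := by
  have hHa : p.2 ⊆ a.1 ∨ p.2 ⊆ a.2 := by
    rcases hlo.2 with hsub | hsub | ⟨-, hempty, hne⟩
    · exact Or.inl (subset_union_left.trans hsub)
    · exact Or.inr (subset_union_left.trans hsub)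
    · exact absurd hempty.symm hne
  rcases hhi.2 with hsub | hsub | ⟨hss, heq, -⟩
  · refine absurd (hp.eq_empty_of_subset_fst_of_subset_snd ?_ subset_rfl) hp₂
    rcases hHa with h | h
    · exact h.trans (subset_union_left.trans hsub)
    · exact h.trans (subset_union_right.trans hsub)
  · rcases hHa with h | h
    · have ha₁ : a.1 = p.2 := (subset_union_left.trans hsub).antisymm h
      have ha₂ : a.2 = ∅ := ha.eq_empty_of_subset_fst_of_subset_snd
        (ha₁ ▸ subset_union_right.trans hsub) subset_rfl
      exact absurd (Prod.ext ha₁ ha₂).symm hlo.1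
    · exact absurd (ha.eq_empty_of_subset_fst_of_subset_snd subset_rfl
        ((subset_union_left.trans hsub).trans h)) ha.1
  · exact ⟨heq, hss.subset⟩

lemma fst_subset_of_splt_of_snd_eq {p a : Set X × Set X} (hp : IsSetPair p)
    (ha : IsSetPair a) (hp₂ : p.2 ≠ ∅) (hlt : splt p a) (hsnd : a.2 = p.2) : p.1 ⊆ a.1 := by
  rcases hlt.2 with hsub | hsub | ⟨hss, -, -⟩
  · exact absurd (ha.eq_empty_of_subset_fst_of_subset_snd (subset_union_right.trans hsub)
      hsnd.ge) hp₂
  · exact absurd (hp.eq_empty_of_subset_fst_of_subset_snd subset_rfl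
      (hsnd ▸ subset_union_left.trans hsub)) hp.1
  · exact hss.subset

namespace OneNestedCompatible

variable {𝒮 : Set (Set X × Set X)}

lemma isSetPair (h : OneNestedCompatible 𝒮) {p : Set X × Set X} (hp : p ∈ 𝒮) : IsSetPair p :=
  h.1 p hp

lemma sple_total_of_snd_eq (h : OneNestedCompatible 𝒮) {a b : Set X × Set X} (ha : a ∈ 𝒮)
    (hb : b ∈ 𝒮) (hsnd : a.2 = b.2) (ha₂ : a.2.Nonempty) (hfst : (a.1 ∩ b.1).Nonempty) :
    sple a b ∨ sple b a := by
  by_cases hab : a = b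
  · exact Or.inl (Or.inr hab)
  -- (NC4)
  rcases h.2.2.2.2.1 a ha b hb hab with ⟨hc, -⟩ | ⟨-, hc, -⟩ | ⟨-, -, hc, -⟩ | ⟨-, -, -, hc⟩
  · exact Or.inl (Or.inl hc)
  · exact Or.inr (Or.inl hc)
  · obtain ⟨x, hx⟩ := ha₂
    have hx' : x ∈ (a.1 ∪ a.2) ∩ (b.1 ∪ b.2) := ⟨Or.inr hx, Or.inr (hsnd ▸ hx)⟩
    exact absurd (hc ▸ hx') (notMem_empty x)
  · exact absurd hc.1 hfst.ne_empty

lemma fst_inter_nonempty_of_union_subset (h : OneNestedCompatible 𝒮) {a b r : Set X × Set X}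
    (ha : a ∈ 𝒮) (hb : b ∈ 𝒮) (hr : r ∈ 𝒮) (ha₂ : a.2 = r.2) (hb₂ : b.2 = r.2)
    (hr₂ : r.2 ≠ ∅) (hunion : a.1 ∪ b.1 ⊆ r.1) : (a.1 ∩ b.1).Nonempty :=
  nonempty_iff_ne_empty.mpr fun hdisj =>
    -- (NC5)
    h.2.2.2.2.2 ⟨a, ha, b, hb, r, hr, ha₂.trans hb₂.symm, hb₂, ha₂ ▸ hr₂, hdisj, Or.inl hunion⟩

end OneNestedCompatible

theorem intervals_totally_ordered_general {X : Type*}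
    (𝒮 : Set (Set X × Set X)) (h : OneNestedCompatible 𝒮)
    (S H : Set X) (hmem : ((S, H) : Set X × Set X) ∈ 𝒮) (hH : H ≠ ∅)
    (q₂ : Set X × Set X)
    (hq₂min : ∀ r ∈ 𝒮, splt ((S, H) : Set X × Set X) r ∧ r.2 ≠ H → sple r q₂ → r = q₂) :
    (∀ a ∈ 𝒮, ∀ b ∈ 𝒮,
      splt ((H, (∅ : Set X)) : Set X × Set X) a → splt a ((S, H) : Set X × Set X) →
      splt ((H, (∅ : Set X)) : Set X × Set X) b → splt b ((S, H) : Set X × Set X) →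
      sple a b ∨ sple b a) ∧
    (∀ a ∈ 𝒮, ∀ b ∈ 𝒮,
      splt ((S, H) : Set X × Set X) a → splt a q₂ →
      splt ((S, H) : Set X × Set X) b → splt b q₂ →
      sple a b ∨ sple b a) := by
  have hSH := h.isSetPair hmem
  constructor
  · intro a ha b hb hHa haS hHb hbS
    obtain ⟨haH, ha₁⟩ := snd_eq_and_fst_subset_of_splt_of_splt hSH (h.isSetPair ha) hH hHa haS
    obtain ⟨hbH, hb₁⟩ := snd_eq_and_fst_subset_of_splt_of_splt hSH (h.isSetPair hb) hH hHb hbS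
    exact h.sple_total_of_snd_eq ha hb (haH.trans hbH.symm) (haH ▸ nonempty_iff_ne_empty.mpr hH)
      (h.fst_inter_nonempty_of_union_subset ha hb hmem haH hbH hH (union_subset ha₁ hb₁))
  · have hsnd : ∀ a ∈ 𝒮, splt (S, H) a → splt a q₂ → a.2 = H := fun a ha hSa haq =>
      by_contra fun hne => haq.1 (hq₂min a ha ⟨hSa, hne⟩ (Or.inl haq))
    intro a ha b hb hSa haq hSb hbq
    have haH := hsnd a ha hSa haq
    have hbH := hsnd b hb hSb hbq
    have hSa₁ := fst_subset_of_splt_of_snd_eq hSH (h.isSetPair ha) hH hSa haH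
    have hSb₁ := fst_subset_of_splt_of_snd_eq hSH (h.isSetPair hb) hH hSb hbH
    exact h.sple_total_of_snd_eq ha hb (haH.trans hbH.symm) (haH ▸ nonempty_iff_ne_empty.mpr hH)
      ((nonempty_iff_ne_empty.mpr hSH.1).mono (subset_inter hSa₁ hSb₁))

/-- If `𝒮` is 1-nested compatible, `(S,H) ∈ 𝒮` with `H ≠ ∅`, and `(S₂,H₂)` is the
unique `≤`-minimal element of `{(S',H') ∈ 𝒮 : (S,H) < (S',H'), H' ≠ H}`, then both
`{(S',H') ∈ 𝒮 : (H,∅) < (S',H') < (S,H)}` and `{(S'',H'') ∈ 𝒮 : (S,H) < (S'',H'') < (S₂,H₂)}`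
are totally ordered by `≤`. -/
theorem intervals_totally_ordered {X : Type*} [Fintype X] [Nonempty X]
    (𝒮 : Set (Set X × Set X)) (h : OneNestedCompatible 𝒮)
    (S H : Set X) (hmem : ((S, H) : Set X × Set X) ∈ 𝒮) (hH : H ≠ ∅)
    (q₂ : Set X × Set X) (hq₂ : q₂ ∈ 𝒮)
    (hq₂M : splt ((S, H) : Set X × Set X) q₂ ∧ q₂.2 ≠ H)
    (hq₂min : ∀ r ∈ 𝒮, splt ((S, H) : Set X × Set X) r ∧ r.2 ≠ H → sple r q₂ → r = q₂) :
    (∀ a ∈ 𝒮, ∀ b ∈ 𝒮,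
      splt ((H, (∅ : Set X)) : Set X × Set X) a → splt a ((S, H) : Set X × Set X) →
      splt ((H, (∅ : Set X)) : Set X × Set X) b → splt b ((S, H) : Set X × Set X) →
      sple a b ∨ sple b a) ∧
    (∀ a ∈ 𝒮, ∀ b ∈ 𝒮,
      splt ((S, H) : Set X × Set X) a → splt a q₂ →
      splt ((S, H) : Set X × Set X) b → splt b q₂ →
      sple a b ∨ sple b a) :=
  intervals_totally_ordered_general 𝒮 h S H hmem hH q₂ hq₂min
end

section
/- Let 𝒮 be a 1-nested compatible set pair system on X. For any three elements (S,H), (S',H), (S'',H) ∈ 𝒮 with the same second component H ≠ ∅, at least two of the three directed paths P(S,H), P(S',H), P(S'',H) coincide (are equal as sequences). -/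
open Set

variable {X : Type*}

/-! If `S ∩ S' ≠ ∅`, the paths `P(S,H)` and `P(S',H)` are equal. Both end at `(H,∅)`, so it
suffices that, read backwards, each element has the same parent on both. Every non-final element
of either path is its head, which lies strictly above `H`, or some `(A,H)` with `A` inside the
second element of that path. Those second elements contain `S` and `S'`, so they meet and by (NC4)
are nested; below the larger one, (NC4) and (NC5) leave no room for two distinct elements of
these kinds covering the same element. Three pairs `(S,H)`, `(S',H)`, `(S'',H)` with pairwise
disjoint first components would violate (NC5). -/

open Set

theorem Set.Nonempty.inter_ne_empty_of_subset {A B C : Set X} (hA : A.Nonempty) (hB : A ⊆ B)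
    (hC : A ⊆ C) : B ∩ C ≠ ∅ :=
  (hA.mono (subset_inter hB hC)).ne_empty

namespace List

variable {α : Type*} {R : α → α → Prop} {P : α → Prop}

theorem eq_of_isChain_of_getLast?_eq {l l' : List α} (hl : l.IsChain R) (hl' : l'.IsChain R)
    (hlast : l.getLast? = l'.getLast?)
    (hhead : ∀ a ∈ l.head?, P a) (hhead' : ∀ a ∈ l'.head?, P a)
    (htail : ∀ a ∈ l.tail, ¬ P a) (htail' : ∀ a ∈ l'.tail, ¬ P a)
    (hparent : ∀ a ∈ l.dropLast, ∀ a' ∈ l'.dropLast, ∀ b, R a b → R a' b → a = a') :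
    l = l' := by
  induction l using reverseRecOn generalizing l' with
  | nil => exact (getLast?_eq_none_iff.1 hlast.symm).symm
  | append_singleton m x ih =>
    obtain rfl | ⟨m', x', rfl⟩ := l'.eq_nil_or_concat'
    · simp at hlast
    obtain rfl : x = x' := by simpa using hlast
    obtain rfl | hm := eq_or_ne m []
    · obtain rfl | hm' := eq_or_ne m' []
      · rfl
      refine absurd (hhead x (by simp)) (htail' x ?_)
      rw [tail_append_of_ne_nil hm']
      exact mem_append_right _ (mem_singleton_self x)
    obtain rfl | hm' := eq_or_ne m' []
    · refine absurd (hhead' x (by simp)) (htail x ?_)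
      rw [tail_append_of_ne_nil hm]
      exact mem_append_right _ (mem_singleton_self x)
    have hlast_mem {k : List α} (hk : k ≠ []) : k.getLast hk ∈ (k ++ [x]).dropLast := by simp
    have hrel {k : List α} (hk : k ≠ []) (h : (k ++ [x]).IsChain R) : R (k.getLast hk) x :=
      h.rel_getLast_head_of_append hk (cons_ne_nil x [])
    have hpar := hparent _ (hlast_mem hm) _ (hlast_mem hm') x (hrel hm hl) (hrel hm' hl')
    congr 1
    refine ih hl.left_of_append hl'.left_of_append ?_ ?_ ?_ ?_ ?_ ?_
    · rw [getLast?_eq_some_getLast hm, getLast?_eq_some_getLast hm', hpar]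
    · simpa [head?_append_of_ne_nil _ hm] using hhead
    · simpa [head?_append_of_ne_nil _ hm'] using hhead'
    · intro a ha
      exact htail a (by rw [tail_append_of_ne_nil hm]; exact mem_append_left _ ha)
    · intro a ha
      exact htail' a (by rw [tail_append_of_ne_nil hm']; exact mem_append_left _ ha)
    · intro a ha a' ha'
      exact hparent a (by simpa using mem_of_mem_dropLast ha)
        a' (by simpa using mem_of_mem_dropLast ha')

end List

theorem SPCovers.not_splt_s11 {𝒮 : Set (Set X × Set X)} {c p p' : Set X × Set X}
    (hp : SPCovers 𝒮 p c) (hp' : SPCovers 𝒮 p' c) : ¬ splt p p' :=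
  fun hlt => hp'.2.2.2 ⟨p, hp.1, hp.2.2.1, hlt⟩

namespace OneNestedCompatible

variable {𝒮 : Set (Set X × Set X)} {p q r : Set X × Set X} {H T : Set X}

theorem fst_nonempty (h : OneNestedCompatible 𝒮) (hp : p ∈ 𝒮) : p.1.Nonempty :=
  nonempty_iff_ne_empty.2 (h.1 p hp).1

theorem fst_inter_snd (h : OneNestedCompatible 𝒮) (hp : p ∈ 𝒮) : p.1 ∩ p.2 = ∅ :=
  (h.1 p hp).2

theorem compatible (h : OneNestedCompatible 𝒮) (hp : p ∈ 𝒮) (hq : q ∈ 𝒮) (hpq : p ≠ q) :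
    splt p q ∨ splt q p ∨ (p.1 ∪ p.2) ∩ (q.1 ∪ q.2) = ∅ ∨
      (p.1 ∩ q.1 = ∅ ∧ p.2 = q.2 ∧ p.2 ≠ ∅) := by
  rcases h.2.2.2.2.1 p hp q hq hpq with ⟨h, -⟩ | ⟨-, h, -⟩ | ⟨-, -, h, -⟩ | ⟨-, -, -, h⟩
  exacts [.inl h, .inr (.inl h), .inr (.inr (.inl h)), .inr (.inr (.inr h))]

theorem fst_inter_fst_ne_empty (h : OneNestedCompatible 𝒮) (hp : p ∈ 𝒮) (hq : q ∈ 𝒮)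
    (hr : r ∈ 𝒮) (hpq : p.2 = q.2) (hqr : q.2 = r.2) (hne : p.2 ≠ ∅)
    (hpqr : p.1 ∪ q.1 ⊆ r.1 ∨ (p.1 ∪ q.1) ∩ r.1 = ∅) : p.1 ∩ q.1 ≠ ∅ :=
  fun hdisj => h.2.2.2.2.2 ⟨p, hp, q, hq, r, hr, hpq, hqr, hne, hdisj, hpqr⟩

theorem splt_iff_ssubset (h : OneNestedCompatible 𝒮) (hp : p ∈ 𝒮) (hq : q ∈ 𝒮)
    (h2 : p.2 = q.2) (hne : q.2 ≠ ∅) : splt p q ↔ p.1 ⊂ q.1 := by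
  refine ⟨fun ⟨_, hlt⟩ => ?_,
    fun hss => ⟨fun e => hss.ne (congrArg Prod.fst e), .inr (.inr ⟨hss, h2, hne⟩)⟩⟩
  rcases hlt with hsub | hsub | ⟨hss, -⟩
  · refine absurd (h.fst_inter_snd hq)
      ((nonempty_iff_ne_empty.2 hne).inter_ne_empty_of_subset ?_ subset_rfl)
    exact h2 ▸ subset_union_right.trans hsub
  · refine absurd (h.fst_inter_snd hp)
      ((h.fst_nonempty hp).inter_ne_empty_of_subset subset_rfl ?_)
    exact h2 ▸ subset_union_left.trans hsub
  · exact hss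

theorem eq_or_ssubset_or_ssubset_or_inter_eq_empty (h : OneNestedCompatible 𝒮) (hp : p ∈ 𝒮)
    (hq : q ∈ 𝒮) (h2 : p.2 = q.2) (hne : p.2 ≠ ∅) :
    p = q ∨ p.1 ⊂ q.1 ∨ q.1 ⊂ p.1 ∨ p.1 ∩ q.1 = ∅ := by
  by_cases hpq : p = q
  · exact .inl hpq
  rcases h.compatible hp hq hpq with hlt | hlt | hdisj | ⟨hdisj, -⟩
  · exact .inr (.inl ((h.splt_iff_ssubset hp hq h2 (h2 ▸ hne)).1 hlt))
  · exact .inr (.inr (.inl ((h.splt_iff_ssubset hq hp h2.symm hne).1 hlt)))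
  · refine absurd hdisj
      ((nonempty_iff_ne_empty.2 hne).inter_ne_empty_of_subset subset_union_right ?_)
    rw [h2]
    exact subset_union_right
  · exact .inr (.inr (.inr hdisj))

theorem splt_of_ssubset_fst (h : OneNestedCompatible 𝒮) (hH : H ≠ ∅) (hp : p ∈ 𝒮)
    (hHp : H ⊂ p.1) (hp2 : p.2 ≠ H) (hq : q ∈ 𝒮) (hq2 : q.2 = H) : splt q p := by
  have hH' := nonempty_iff_ne_empty.2 hH
  rcases h.compatible hp hq (fun e => hp2 (e ▸ hq2)) with ⟨-, hlt⟩ | hlt | hdisj | ⟨-, h2, -⟩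
  · rcases hlt with hsub | hsub | ⟨-, h2, -⟩
    · exact absurd (h.fst_inter_snd hq)
        (hH'.inter_ne_empty_of_subset (hHp.subset.trans (subset_union_left.trans hsub)) hq2.ge)
    · exact absurd (hq2 ▸ subset_union_left.trans hsub) (not_subset_of_ssubset hHp)
    · exact absurd (h2.trans hq2) hp2
  · exact hlt
  · exact absurd hdisj (hH'.inter_ne_empty_of_subset (hHp.subset.trans subset_union_left)
      (hq2.ge.trans subset_union_right))
  · exact absurd (h2.trans hq2) hp2

theorem eq_of_covers (h : OneNestedCompatible 𝒮) (hH : H ≠ ∅) (hT : (T, H) ∈ 𝒮)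
    {c p p' : Set X × Set X} (hp : SPCovers 𝒮 p c) (hp' : SPCovers 𝒮 p' c)
    (hpA : (H ⊂ p.1 ∧ p.2 ≠ H) ∨ (p.2 = H ∧ p.1 ⊆ T))
    (hp'A : (H ⊂ p'.1 ∧ p'.2 ≠ H) ∨ (p'.2 = H ∧ p'.1 ⊆ T)) : p = p' := by
  by_contra hne
  rcases hpA with ⟨hHp, hp2⟩ | ⟨hp2, hpT⟩ <;> rcases hp'A with ⟨hHp', hp'2⟩ | ⟨hp'2, hp'T⟩
  · have hH' := nonempty_iff_ne_empty.2 hH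
    rcases h.compatible hp.1 hp'.1 hne with hlt | hlt | hdisj | ⟨hdisj, -⟩
    · exact hp.not_splt_s11 hp' hlt
    · exact hp'.not_splt_s11 hp hlt
    · exact hH'.inter_ne_empty_of_subset (hHp.subset.trans subset_union_left)
        (hHp'.subset.trans subset_union_left) hdisj
    · exact hH'.inter_ne_empty_of_subset hHp.subset hHp'.subset hdisj
  · exact hp'.not_splt_s11 hp (h.splt_of_ssubset_fst hH hp.1 hHp hp2 hp'.1 hp'2)
  · exact hp.not_splt_s11 hp' (h.splt_of_ssubset_fst hH hp'.1 hHp' hp'2 hp.1 hp2)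
  · have h2 : p.2 = p'.2 := hp2.trans hp'2.symm
    rcases h.eq_or_ssubset_or_ssubset_or_inter_eq_empty hp.1 hp'.1 h2 (hp2 ▸ hH)
      with heq | hss | hss | hdisj
    · exact hne heq
    · exact hp.not_splt_s11 hp' ((h.splt_iff_ssubset hp.1 hp'.1 h2 (hp'2 ▸ hH)).2 hss)
    · exact hp'.not_splt_s11 hp ((h.splt_iff_ssubset hp'.1 hp.1 h2.symm (hp2 ▸ hH)).2 hss)
    · exact h.fst_inter_fst_ne_empty hp.1 hp'.1 hT h2 hp'2 (hp2 ▸ hH)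
        (.inl (union_subset hpT hp'T)) hdisj

end OneNestedCompatible

namespace IsSPPath

variable {𝒮 : Set (Set X × Set X)} {S H : Set X} {L : List (Set X × Set X)}

theorem isChain (hL : IsSPPath 𝒮 S H L) : L.IsChain (SPCovers 𝒮) :=
  hL.2.1

theorem getLast?_eq (hL : IsSPPath 𝒮 S H L) : L.getLast? = some (H, ∅) :=
  hL.2.2.1

theorem covers (hL : IsSPPath 𝒮 S H L) {i : ℕ} (hi : i + 1 < L.length) :
    SPCovers 𝒮 L[i] L[i + 1] :=
  List.isChain_iff_getElem.1 hL.isChain i hi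

theorem snd_eq (hL : IsSPPath 𝒮 S H L) {i : ℕ} (h1 : 1 ≤ i) (hi : i + 1 < L.length) :
    L[i].2 = H :=
  hL.2.2.2.1 i _ h1 hi (List.getElem?_eq_getElem _)

theorem fst_subset_fst_one (h : OneNestedCompatible 𝒮) (hH : H ≠ ∅) (hL : IsSPPath 𝒮 S H L)
    {i : ℕ} (h1 : 1 ≤ i) (hi : i + 1 < L.length) : L[i].1 ⊆ (L[1]'(by omega)).1 := by
  induction i, h1 using Nat.le_induction with
  | base => rfl
  | succ j hj ih =>
    have hcov := hL.covers (i := j) (by omega)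
    have hsnd : L[j + 1].2 = L[j].2 := by rw [hL.snd_eq (by omega) hi, hL.snd_eq hj (by omega)]
    have hlt : L[j + 1].1 ⊂ L[j].1 :=
      (h.splt_iff_ssubset hcov.2.1 hcov.1 hsnd (by rw [hL.snd_eq hj (by omega)]; exact hH)).1
        hcov.2.2.1
    exact hlt.subset.trans (ih (by omega))

theorem exists_anchor (hL : IsSPPath 𝒮 S H L) :
    ∃ i, ∃ (_ : 1 ≤ i) (hi : i + 1 < L.length), L[i] = (S, H) := by
  obtain ⟨i, h1, hi, hLi⟩ := hL.2.2.2.2.1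
  exact ⟨i, h1, hi, (List.getElem?_eq_some_iff.1 hLi).2⟩

theorem mem (hL : IsSPPath 𝒮 S H L) : (S, H) ∈ 𝒮 := by
  obtain ⟨i, -, hi, hLi⟩ := hL.exists_anchor
  exact hLi ▸ (hL.covers hi).1

theorem ssubset_fst_of_mem_head? (h : OneNestedCompatible 𝒮) (hL : IsSPPath 𝒮 S H L) :
    ∀ a ∈ L.head?, H ⊂ a.1 ∧ a.2 ≠ H := by
  obtain ⟨p, hp, hSH, hp2⟩ := hL.2.2.2.2.2
  intro a ha
  obtain rfl : a = p := Option.some_injective _ (ha.symm.trans hp)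
  refine ⟨(subset_union_right.trans hSH).ssubset_of_not_subset fun hpH => ?_, hp2⟩
  exact (h.fst_nonempty hL.mem).inter_ne_empty_of_subset subset_rfl
    ((subset_union_left.trans hSH).trans hpH) (h.fst_inter_snd hL.mem)

theorem not_ssubset_fst_of_mem_tail (hL : IsSPPath 𝒮 S H L) :
    ∀ a ∈ L.tail, ¬ (H ⊂ a.1 ∧ a.2 ≠ H) := by
  rintro a ha ⟨hHa, ha2⟩
  obtain ⟨i, hi, rfl⟩ := List.mem_iff_getElem.1 ha
  rw [List.getElem_tail] at hHa ha2
  rw [List.length_tail] at hi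
  rcases Nat.lt_or_ge (i + 2) L.length with hi' | hi'
  · exact ha2 (hL.snd_eq (by omega) hi')
  · have hlast : L[i + 1]? = some (H, ∅) := by
      rw [show i + 1 = L.length - 1 by omega, ← List.getLast?_eq_getElem?]
      exact hL.getLast?_eq
    rw [(List.getElem?_eq_some_iff.1 hlast).2] at hHa
    exact hHa.ne rfl

theorem exists_top (h : OneNestedCompatible 𝒮) (hH : H ≠ ∅) (hL : IsSPPath 𝒮 S H L) :
    ∃ T, (T, H) ∈ 𝒮 ∧ S ⊆ T ∧
      ∀ a ∈ L.dropLast, (H ⊂ a.1 ∧ a.2 ≠ H) ∨ (a.2 = H ∧ a.1 ⊆ T) := by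
  have hlen := hL.1
  refine ⟨(L[1]'(by omega)).1, ?_, ?_, ?_⟩
  · rw [← hL.snd_eq le_rfl (by omega)]
    exact (hL.covers (i := 1) (by omega)).1
  · obtain ⟨i, h1, hi, hLi⟩ := hL.exists_anchor
    simpa [hLi] using hL.fst_subset_fst_one h hH h1 hi
  · intro a ha
    obtain ⟨i, hi, rfl⟩ := List.mem_iff_getElem.1 ha
    rw [List.getElem_dropLast]
    rw [List.length_dropLast] at hi
    rcases Nat.eq_zero_or_pos i with rfl | hi0
    · exact .inl (hL.ssubset_fst_of_mem_head? h _ (by simp [List.head?_eq_getElem?]))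
    · exact .inr ⟨hL.snd_eq hi0 (by omega), hL.fst_subset_fst_one h hH hi0 (by omega)⟩

theorem eq_of_inter_nonempty (h : OneNestedCompatible 𝒮) (hH : H ≠ ∅) {S' : Set X}
    {L' : List (Set X × Set X)} (hL : IsSPPath 𝒮 S H L) (hL' : IsSPPath 𝒮 S' H L')
    (hSS' : (S ∩ S').Nonempty) : L = L' := by
  obtain ⟨T, hT, hST, hLT⟩ := hL.exists_top h hH
  obtain ⟨T', hT', hST', hLT'⟩ := hL'.exists_top h hH
  obtain ⟨U, hU, hTU, hT'U⟩ : ∃ U, (U, H) ∈ 𝒮 ∧ T ⊆ U ∧ T' ⊆ U := by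
    rcases h.eq_or_ssubset_or_ssubset_or_inter_eq_empty hT hT' rfl hH
      with heq | hss | hss | hdisj
    · exact ⟨T', hT', (Prod.mk.inj heq).1.le, le_rfl⟩
    · exact ⟨T', hT', hss.subset, le_rfl⟩
    · exact ⟨T, hT, le_rfl, hss.subset⟩
    · exact absurd hdisj (hSS'.inter_ne_empty_of_subset (inter_subset_left.trans hST)
        (inter_subset_right.trans hST'))
  have widen {a : Set X × Set X} {V : Set X} (hVU : V ⊆ U) :
      (H ⊂ a.1 ∧ a.2 ≠ H) ∨ (a.2 = H ∧ a.1 ⊆ V) → (H ⊂ a.1 ∧ a.2 ≠ H) ∨ (a.2 = H ∧ a.1 ⊆ U) :=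
    Or.imp_right fun ⟨ha2, haV⟩ => ⟨ha2, haV.trans hVU⟩
  refine List.eq_of_isChain_of_getLast?_eq hL.isChain hL'.isChain
    (hL.getLast?_eq.trans hL'.getLast?_eq.symm)
    (hL.ssubset_fst_of_mem_head? h) (hL'.ssubset_fst_of_mem_head? h)
    hL.not_ssubset_fst_of_mem_tail hL'.not_ssubset_fst_of_mem_tail ?_
  intro a ha a' ha' c hac ha'c
  exact h.eq_of_covers hH hU hac ha'c (widen hTU (hLT a ha)) (widen hT'U (hLT' a' ha'))

end IsSPPath

theorem two_paths_coincide_general {X : Type*}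
    (𝒮 : Set (Set X × Set X)) (h : OneNestedCompatible 𝒮)
    (S S' S'' H : Set X) (hH : H ≠ ∅)
    (L L' L'' : List (Set X × Set X))
    (hL : IsSPPath 𝒮 S H L) (hL' : IsSPPath 𝒮 S' H L') (hL'' : IsSPPath 𝒮 S'' H L'') :
    L = L' ∨ L = L'' ∨ L' = L'' := by
  obtain h12 | h12 := (S ∩ S').eq_empty_or_nonempty
  swap; · exact .inl (hL.eq_of_inter_nonempty h hH hL' h12)
  obtain h13 | h13 := (S ∩ S'').eq_empty_or_nonempty
  swap; · exact .inr (.inl (hL.eq_of_inter_nonempty h hH hL'' h13))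
  obtain h23 | h23 := (S' ∩ S'').eq_empty_or_nonempty
  swap; · exact .inr (.inr (hL'.eq_of_inter_nonempty h hH hL'' h23))
  refine absurd h12 (h.fst_inter_fst_ne_empty hL.mem hL'.mem hL''.mem rfl rfl hH (.inr ?_))
  rw [union_inter_distrib_right, h13, h23, union_empty]

/-- If `𝒮` is 1-nested compatible, then for any three elements `(S,H)`, `(S',H)`,
`(S'',H) ∈ 𝒮` with the same second component `H ≠ ∅`, at least two of the directed paths
`P(S,H)`, `P(S',H)`, `P(S'',H)` coincide. -/
theorem two_paths_coincide {X : Type*} [Fintype X] [Nonempty X]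
    (𝒮 : Set (Set X × Set X)) (h : OneNestedCompatible 𝒮)
    (S S' S'' H : Set X) (hH : H ≠ ∅)
    (hmem : ((S, H) : Set X × Set X) ∈ 𝒮) (hmem' : ((S', H) : Set X × Set X) ∈ 𝒮)
    (hmem'' : ((S'', H) : Set X × Set X) ∈ 𝒮)
    (L L' L'' : List (Set X × Set X))
    (hL : IsSPPath 𝒮 S H L) (hL' : IsSPPath 𝒮 S' H L') (hL'' : IsSPPath 𝒮 S'' H L'') :
    L = L' ∨ L = L'' ∨ L' = L'' :=
  two_paths_coincide_general 𝒮 h S S' S'' H hH L L' L'' hL hL' hL''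
end

section
/- Let 𝒮 be a 1-nested compatible set pair system on X. For any three elements (S₁,H), (S₂,H), (S₃,H) ∈ 𝒮 with the same second component H ≠ ∅, at least two of them are comparable under ≤ (i.e., there exist i ≠ j with (S_i,H) ≤ (S_j,H) or (S_j,H) ≤ (S_i,H)). -/
open Set

variable {X : Type*}

namespace OneNestedCompatible

variable {𝒮 : Set (Set X × Set X)}

theorem fst_inter_eq_empty_of_not_sple (h : OneNestedCompatible 𝒮) {p q : Set X × Set X}
    (hp : p ∈ 𝒮) (hq : q ∈ 𝒮) (hpq : ¬ sple p q) (hqp : ¬ sple q p)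
    (hov : ((p.1 ∪ p.2) ∩ (q.1 ∪ q.2)).Nonempty) : p.1 ∩ q.1 = ∅ :=
  (h.2.2.2.2.1 p hp q hq (fun heq => hpq (Or.inr heq)) |>.of_not_of_not_of_not
    (fun hlt => hpq (Or.inl hlt)) (fun hlt => hqp (Or.inl hlt)) hov.ne_empty).1

theorem fst_inter_eq_empty_of_not_sple_of_snd_eq (h : OneNestedCompatible 𝒮) {A B H : Set X}
    (hH : H.Nonempty) (hA : (A, H) ∈ 𝒮) (hB : (B, H) ∈ 𝒮)
    (hAB : ¬ sple (A, H) (B, H)) (hBA : ¬ sple (B, H) (A, H)) : A ∩ B = ∅ :=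
  have ⟨x, hx⟩ := hH
  h.fst_inter_eq_empty_of_not_sple hA hB hAB hBA ⟨x, Or.inr hx, Or.inr hx⟩

theorem not_pairwise_disjoint_fst_of_snd_eq (h : OneNestedCompatible 𝒮) {S₁ S₂ S₃ H : Set X}
    (hH : H ≠ ∅) (h₁ : (S₁, H) ∈ 𝒮) (h₂ : (S₂, H) ∈ 𝒮) (h₃ : (S₃, H) ∈ 𝒮)
    (h₁₂ : S₁ ∩ S₂ = ∅) (h₁₃ : S₁ ∩ S₃ = ∅) (h₂₃ : S₂ ∩ S₃ = ∅) : False :=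
  h.2.2.2.2.2 ⟨(S₁, H), h₁, (S₂, H), h₂, (S₃, H), h₃, rfl, rfl, hH, h₁₂,
    Or.inr (by rw [union_inter_distrib_right, h₁₃, h₂₃, union_empty])⟩

end OneNestedCompatible

theorem two_of_three_comparable_general {X : Type*}
    (𝒮 : Set (Set X × Set X)) (h : OneNestedCompatible 𝒮)
    (S₁ S₂ S₃ H : Set X) (hH : H ≠ ∅)
    (h₁ : ((S₁, H) : Set X × Set X) ∈ 𝒮) (h₂ : ((S₂, H) : Set X × Set X) ∈ 𝒮)
    (h₃ : ((S₃, H) : Set X × Set X) ∈ 𝒮) :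
    (sple ((S₁, H) : Set X × Set X) (S₂, H) ∨ sple ((S₂, H) : Set X × Set X) (S₁, H)) ∨
    (sple ((S₁, H) : Set X × Set X) (S₃, H) ∨ sple ((S₃, H) : Set X × Set X) (S₁, H)) ∨
    (sple ((S₂, H) : Set X × Set X) (S₃, H) ∨ sple ((S₃, H) : Set X × Set X) (S₂, H)) := by
  by_contra! hinc
  obtain ⟨⟨n₁₂, n₂₁⟩, ⟨n₁₃, n₃₁⟩, n₂₃, n₃₂⟩ := hinc
  have hH' := nonempty_iff_ne_empty.mpr hH
  exact h.not_pairwise_disjoint_fst_of_snd_eq hH h₁ h₂ h₃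
    (h.fst_inter_eq_empty_of_not_sple_of_snd_eq hH' h₁ h₂ n₁₂ n₂₁)
    (h.fst_inter_eq_empty_of_not_sple_of_snd_eq hH' h₁ h₃ n₁₃ n₃₁)
    (h.fst_inter_eq_empty_of_not_sple_of_snd_eq hH' h₂ h₃ n₂₃ n₃₂)

/-- If `𝒮` is 1-nested compatible, then for any three elements `(S₁,H)`, `(S₂,H)`,
`(S₃,H) ∈ 𝒮` with the same second component `H ≠ ∅`, at least two of them are comparable
under `≤`. -/
theorem two_of_three_comparable {X : Type*} [Fintype X] [Nonempty X]
    (𝒮 : Set (Set X × Set X)) (h : OneNestedCompatible 𝒮)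
    (S₁ S₂ S₃ H : Set X) (hH : H ≠ ∅)
    (h₁ : ((S₁, H) : Set X × Set X) ∈ 𝒮) (h₂ : ((S₂, H) : Set X × Set X) ∈ 𝒮)
    (h₃ : ((S₃, H) : Set X × Set X) ∈ 𝒮) :
    (sple ((S₁, H) : Set X × Set X) (S₂, H) ∨ sple ((S₂, H) : Set X × Set X) (S₁, H)) ∨
    (sple ((S₁, H) : Set X × Set X) (S₃, H) ∨ sple ((S₃, H) : Set X × Set X) (S₁, H)) ∨
    (sple ((S₂, H) : Set X × Set X) (S₃, H) ∨ sple ((S₃, H) : Set X × Set X) (S₂, H)) :=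
  two_of_three_comparable_general 𝒮 h S₁ S₂ S₃ H hH h₁ h₂ h₃
end
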